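/- (Pointwise convergence of the covariance to equilibrium via Riemann–Lebesgue) Let m > 0, ω(k) = √(|k|²+m²), and q̂₀ ∈ L¹(ℝ³, ℝ^{8×8}). Then for each fixed z ∈ ℝ³, as t → ∞, ∫ e^{ik·z} cos(2ω(k)t) q̂₀(k) dk → 0 and ∫ e^{ik·z} (sin(2ω(k)t)/ω(k)) q̂₀(k) dk → 0. -/

import Mathlib

/-!
Write `ψ k = 2 √(|k|² + m²)`. Both integrands have the form `cos (ψ k t) f k` or
`sin (ψ k t) f k` with `f ∈ L¹` (for the sine, `f` absorbs the factor `1 / ω ≤ 1 / m`), hence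
are combinations of `∫ e^{i ψ(k) w} f(k) dk` at `w = ±t`. Splitting `f` into four nonnegative
parts, each such integral is the characteristic function of the pushforward along `ψ` of a
finite measure `u dk`. That pushforward is absolutely continuous because `ψ` pulls null sets
back to null sets: the norm does so by polar coordinates, and `r ↦ 2 √(r² + m²)` does so
because off `r = 0` it has the differentiable inverse `s ↦ ±√(s² / 4 - m²)`. The
Riemann–Lebesgue lemma then makes these characteristic functions vanish at infinity.
-/

open MeasureTheory Complex Filter

local notation "ℝ³" => EuclideanSpace ℝ (Fin 3)

open Real Set Measure
open scoped Topology

theorem tendsto_charFun_cocompact_of_absolutelyContinuous {ν : Measure ℝ} [SigmaFinite ν]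
    (hν : ν ≪ volume) : Tendsto (charFun ν) (cocompact ℝ) (𝓝 0) := by
  have hscale : Tendsto (fun t : ℝ => -(2 * π)⁻¹ * t) (cocompact ℝ) (cocompact ℝ) :=
    tendsto_cocompact_mul_left₀ (by simp [pi_ne_zero])
  refine ((Real.tendsto_integral_exp_smul_cocompact
    fun x => ((ν.rnDeriv volume x).toReal : ℂ)).comp hscale).congr fun t => ?_
  rw [charFun_apply_real, ← integral_rnDeriv_smul hν]
  refine integral_congr_ae (Eventually.of_forall fun x => ?_)
  simp only [Circle.smul_def, fourierChar_apply, smul_eq_mul, real_smul]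
  have hphase : 2 * π * -(x * (-(2 * π)⁻¹ * t)) = t * x := by field_simp
  rw [hphase, mul_comm, ofReal_mul]

variable {α : Type*} [MeasurableSpace α] {μ : Measure α}

theorem integrable_exp_mul {ψ : α → ℝ} (hψ : Measurable ψ) {f : α → ℂ} (hf : Integrable f μ)
    (w : ℝ) : Integrable (fun x => exp ((ψ x * w : ℝ) * I) * f x) μ :=
  hf.bdd_mul (c := 1) (by fun_prop) (ae_of_all _ fun x => (norm_exp_ofReal_mul_I _).le)

theorem integral_exp_mul_eq_charFun_map_withDensity {ψ u : α → ℝ} (hψ : Measurable ψ)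
    (hu : AEMeasurable u μ) (hu0 : 0 ≤ᵐ[μ] u) (w : ℝ) :
    ∫ x, exp ((ψ x * w : ℝ) * I) * u x ∂μ
      = charFun ((μ.withDensity fun x => ENNReal.ofReal (u x)).map ψ) w := by
  rw [charFun_apply_real, integral_map hψ.aemeasurable (by fun_prop),
    integral_withDensity_eq_integral_toReal_smul₀ hu.ennreal_ofReal
      (ae_of_all _ fun _ => ENNReal.ofReal_lt_top)]
  refine integral_congr_ae (hu0.mono fun x (hx : 0 ≤ u x) => ?_)
  dsimp only
  rw [ENNReal.toReal_ofReal hx, real_smul, mul_comm, ofReal_mul, mul_comm (w : ℂ)]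

namespace MeasureTheory.Measure.QuasiMeasurePreserving

variable {ψ : α → ℝ}

theorem tendsto_integral_exp_mul_ofReal_of_nonneg (hψ : QuasiMeasurePreserving ψ μ volume)
    {u : α → ℝ} (hu : Integrable u μ) (hu0 : 0 ≤ᵐ[μ] u) :
    Tendsto (fun w : ℝ => ∫ x, exp ((ψ x * w : ℝ) * I) * u x ∂μ) (cocompact ℝ) (𝓝 0) := by
  have := isFiniteMeasure_withDensity_ofReal hu.2
  simp_rw [integral_exp_mul_eq_charFun_map_withDensity hψ.measurable hu.aemeasurable hu0]
  exact tendsto_charFun_cocompact_of_absolutelyContinuous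
    (((withDensity_absolutelyContinuous _ _).map hψ.measurable).trans hψ.absolutelyContinuous)

theorem tendsto_integral_exp_mul_ofReal (hψ : QuasiMeasurePreserving ψ μ volume) {u : α → ℝ}
    (hu : Integrable u μ) :
    Tendsto (fun w : ℝ => ∫ x, exp ((ψ x * w : ℝ) * I) * u x ∂μ) (cocompact ℝ) (𝓝 0) := by
  have hpos := hψ.tendsto_integral_exp_mul_ofReal_of_nonneg hu.pos_part
    (ae_of_all _ fun _ => le_max_right _ _)
  have hneg := hψ.tendsto_integral_exp_mul_ofReal_of_nonneg hu.neg_part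
    (ae_of_all _ fun _ => le_max_right _ _)
  convert hpos.sub hneg using 1
  · ext w
    rw [← integral_sub]
    · simp only [← mul_sub, ← ofReal_sub, max_zero_sub_max_neg_zero_eq_self]
    · exact integrable_exp_mul hψ.measurable hu.pos_part.ofReal w
    · exact integrable_exp_mul hψ.measurable hu.neg_part.ofReal w
  · simp

theorem tendsto_integral_exp_mul (hψ : QuasiMeasurePreserving ψ μ volume) {f : α → ℂ}
    (hf : Integrable f μ) :
    Tendsto (fun w : ℝ => ∫ x, exp ((ψ x * w : ℝ) * I) * f x ∂μ) (cocompact ℝ) (𝓝 0) := by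
  have hre : Integrable (fun x => (f x).re) μ := hf.re
  have him : Integrable (fun x => (f x).im) μ := hf.im
  convert (hψ.tendsto_integral_exp_mul_ofReal hre).add
    ((hψ.tendsto_integral_exp_mul_ofReal him).mul_const I) using 1
  · ext w
    rw [← integral_mul_const, ← integral_add]
    · refine integral_congr_ae (ae_of_all _ fun x => ?_)
      dsimp only
      conv_lhs => rw [← re_add_im (f x)]
      ring
    · exact integrable_exp_mul hψ.measurable hre.ofReal w
    · exact (integrable_exp_mul hψ.measurable him.ofReal w).mul_const I
  · simp

theorem tendsto_integral_cos_mul (hψ : QuasiMeasurePreserving ψ μ volume) {f : α → ℂ}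
    (hf : Integrable f μ) :
    Tendsto (fun w : ℝ => ∫ x, (Real.cos (ψ x * w) : ℂ) * f x ∂μ) (cocompact ℝ) (𝓝 0) := by
  have h := hψ.tendsto_integral_exp_mul hf
  have hneg : Tendsto (fun w : ℝ => -w) (cocompact ℝ) (cocompact ℝ) :=
    (Homeomorph.neg ℝ).map_cocompact.le
  convert (h.add (h.comp hneg)).div_const 2 using 1
  · ext w
    rw [Function.comp_def, ← integral_add (integrable_exp_mul hψ.measurable hf w)
      (integrable_exp_mul hψ.measurable hf (-w)), ← integral_div]
    refine integral_congr_ae (ae_of_all _ fun x => ?_)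
    simp only [ofReal_cos, Complex.cos, ofReal_mul, ofReal_neg]
    ring_nf
  · simp

theorem tendsto_integral_sin_mul (hψ : QuasiMeasurePreserving ψ μ volume) {f : α → ℂ}
    (hf : Integrable f μ) :
    Tendsto (fun w : ℝ => ∫ x, (Real.sin (ψ x * w) : ℂ) * f x ∂μ) (cocompact ℝ) (𝓝 0) := by
  have h := hψ.tendsto_integral_exp_mul hf
  have hneg : Tendsto (fun w : ℝ => -w) (cocompact ℝ) (cocompact ℝ) :=
    (Homeomorph.neg ℝ).map_cocompact.le
  convert ((h.comp hneg).sub h).mul_const (I / 2) using 1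
  · ext w
    rw [Function.comp_def, ← integral_sub (integrable_exp_mul hψ.measurable hf (-w))
      (integrable_exp_mul hψ.measurable hf w), ← integral_mul_const]
    refine integral_congr_ae (ae_of_all _ fun x => ?_)
    simp only [ofReal_sin, Complex.sin, ofReal_mul, ofReal_neg]
    ring_nf
  · simp

end MeasureTheory.Measure.QuasiMeasurePreserving

section Norm

variable {E : Type*} [NormedAddCommGroup E] [NormedSpace ℝ E] [MeasurableSpace E] [BorelSpace E]
  [FiniteDimensional ℝ E] [Nontrivial E] (μ : Measure E) [μ.IsAddHaarMeasure]

theorem quasiMeasurePreserving_norm : QuasiMeasurePreserving (‖·‖) μ volume := by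
  have hval : QuasiMeasurePreserving ((↑) : Ioi (0 : ℝ) → ℝ)
      (volumeIoiPow (Module.finrank ℝ E - 1)) volume := by
    refine ⟨measurable_subtype_coe, .trans ((withDensity_absolutelyContinuous _ _).map
      measurable_subtype_coe) ?_⟩
    rw [map_comap_subtype_coe measurableSet_Ioi]
    exact restrict_le_self.absolutelyContinuous
  have hpolar := (hval.comp quasiMeasurePreserving_snd).comp
    μ.measurePreserving_homeomorphUnitSphereProd.quasiMeasurePreserving
  have hμ : (μ.comap ((↑) : ({(0 : E)}ᶜ : Set E) → E)).map (↑) = μ := by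
    rw [map_comap_subtype_coe (measurableSet_singleton _).compl, restrict_compl_singleton]
  rw [← hμ]
  refine ⟨continuous_norm.measurable, ?_⟩
  rw [map_map continuous_norm.measurable measurable_subtype_coe]
  simpa [Function.comp_def] using hpolar.absolutelyContinuous

end Norm

theorem quasiMeasurePreserving_two_mul_sqrt_sq_add_sq (m : ℝ) :
    QuasiMeasurePreserving (fun r : ℝ => 2 * √(r ^ 2 + m ^ 2)) volume volume := by
  set g : ℝ → ℝ := fun s => √((s / 2) ^ 2 - m ^ 2)
  refine ⟨by fun_prop, AbsolutelyContinuous.mk fun N hN hN0 => ?_⟩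
  rw [map_apply (by fun_prop) hN]
  set S := N ∩ {s | 0 < (s / 2) ^ 2 - m ^ 2}
  have hg : DifferentiableOn ℝ g S := fun s hs =>
    ((by fun_prop : DifferentiableAt ℝ (fun s : ℝ => (s / 2) ^ 2 - m ^ 2) s).sqrt
      hs.2.ne').differentiableWithinAt
  have hS : volume S = 0 := measure_mono_null inter_subset_left hN0
  have hinv : ∀ r, g (2 * √(r ^ 2 + m ^ 2)) = |r| := fun r => by
    simp only [g]
    rw [mul_div_cancel_left₀ _ two_ne_zero, Real.sq_sqrt (by positivity), add_sub_cancel_right,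
      Real.sqrt_sq_eq_abs]
  have hsub : (fun r : ℝ => 2 * √(r ^ 2 + m ^ 2)) ⁻¹' N ⊆ {0} ∪ (g '' S ∪ (-g) '' S) := by
    intro r hr
    rcases eq_or_ne r 0 with rfl | hr0
    · exact Or.inl rfl
    have hrS : 2 * √(r ^ 2 + m ^ 2) ∈ S := by
      refine ⟨hr, show 0 < (2 * √(r ^ 2 + m ^ 2) / 2) ^ 2 - m ^ 2 from ?_⟩
      rw [mul_div_cancel_left₀ _ two_ne_zero, Real.sq_sqrt (by positivity), add_sub_cancel_right]
      positivity
    rcases le_or_gt 0 r with h | h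
    · exact Or.inr (Or.inl ⟨_, hrS, by rw [hinv, abs_of_nonneg h]⟩)
    · exact Or.inr (Or.inr ⟨_, hrS, by rw [Pi.neg_apply, hinv, abs_of_neg h, neg_neg]⟩)
  refine measure_mono_null hsub (measure_union_null (measure_singleton _)
    (measure_union_null ?_ ?_))
  · exact addHaar_image_eq_zero_of_differentiableOn_of_addHaar_eq_zero _ hg hS
  · exact addHaar_image_eq_zero_of_differentiableOn_of_addHaar_eq_zero _ hg.neg hS

theorem oscillatory_integrals_vanish_general (m : ℝ) (hm : 0 < m)
    (q0 : ℝ³ → Matrix (Fin 8) (Fin 8) ℝ)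
    (hqL1 : ∀ i j : Fin 8, Integrable fun k : ℝ³ => q0 k i j) :
    ∀ (z : ℝ³) (i j : Fin 8),
      Tendsto (fun t : ℝ =>
          ∫ k : ℝ³, Complex.exp (I * ((inner ℝ k z : ℝ) : ℂ)) *
            (Real.cos (2 * Real.sqrt (‖k‖ ^ 2 + m ^ 2) * t) : ℝ) * (q0 k i j : ℝ))
        atTop (nhds 0) ∧
      Tendsto (fun t : ℝ =>
          ∫ k : ℝ³, Complex.exp (I * ((inner ℝ k z : ℝ) : ℂ)) *
            ((Real.sin (2 * Real.sqrt (‖k‖ ^ 2 + m ^ 2) * t) /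
              Real.sqrt (‖k‖ ^ 2 + m ^ 2) : ℝ)) * (q0 k i j : ℝ))
        atTop (nhds 0) := by
  intro z i j
  have hψ : QuasiMeasurePreserving (fun k : ℝ³ => 2 * √(‖k‖ ^ 2 + m ^ 2)) volume volume :=
    (quasiMeasurePreserving_two_mul_sqrt_sq_add_sq m).comp (quasiMeasurePreserving_norm volume)
  set f : ℝ³ → ℂ := fun k => exp (I * ((inner ℝ k z : ℝ) : ℂ)) * (q0 k i j : ℂ)
  have hf : Integrable f := by
    refine (hqL1 i j).ofReal.bdd_mul (c := 1) (by fun_prop) (ae_of_all _ fun k => ?_)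
    rw [mul_comm, norm_exp_ofReal_mul_I]
  have hfω : Integrable fun k => f k / √(‖k‖ ^ 2 + m ^ 2) := by
    refine hf.mul_bdd (c := m⁻¹) (by fun_prop) (ae_of_all _ fun k => ?_)
    rw [norm_inv, norm_real, Real.norm_of_nonneg (Real.sqrt_nonneg _)]
    exact inv_anti₀ hm (Real.le_sqrt_of_sq_le (by nlinarith [sq_nonneg ‖k‖]))
  constructor
  · refine ((hψ.tendsto_integral_cos_mul hf).mono_left atTop_le_cocompact).congr fun t => ?_
    refine integral_congr_ae (ae_of_all _ fun k => ?_)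
    simp only [f]
    ring
  · refine ((hψ.tendsto_integral_sin_mul hfω).mono_left atTop_le_cocompact).congr fun t => ?_
    refine integral_congr_ae (ae_of_all _ fun k => ?_)
    simp only [f]
    push_cast
    ring

/-- Pointwise convergence of the covariance to equilibrium: the oscillatory integrals
    ∫ e^{ik·z} cos(2ω(k)t) q̂₀(k) dk and ∫ e^{ik·z} sin(2ω(k)t)/ω(k) q̂₀(k) dk vanish
    as t → ∞, for q̂₀ ∈ L¹ and ω(k) = √(|k|²+m²), m > 0. -/
theorem oscillatory_integrals_vanish (m : ℝ) (hm : 0 < m)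
    (q0 : ℝ³ → Matrix (Fin 8) (Fin 8) ℝ)
    (hqmeas : ∀ i j : Fin 8, Measurable fun k => q0 k i j)
    (hqL1 : ∀ i j : Fin 8, Integrable fun k : ℝ³ => q0 k i j) :
    ∀ (z : ℝ³) (i j : Fin 8),
      Tendsto (fun t : ℝ =>
          ∫ k : ℝ³, Complex.exp (I * ((inner ℝ k z : ℝ) : ℂ)) *
            (Real.cos (2 * Real.sqrt (‖k‖ ^ 2 + m ^ 2) * t) : ℝ) * (q0 k i j : ℝ))
        atTop (nhds 0) ∧
      Tendsto (fun t : ℝ =>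
          ∫ k : ℝ³, Complex.exp (I * ((inner ℝ k z : ℝ) : ℂ)) *
            ((Real.sin (2 * Real.sqrt (‖k‖ ^ 2 + m ^ 2) * t) /
              Real.sqrt (‖k‖ ^ 2 + m ^ 2) : ℝ)) * (q0 k i j : ℝ))
        atTop (nhds 0) :=
  oscillatory_integrals_vanish_general m hm q0 hqL1
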